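/- (Lemma 1) If v₁,…,v_d are orthonormal and not all cᵢ are zero, then ‖r₀‖₂ = ‖c‖₂ and for every k ≥ 1 and every y ∈ ℂ^k there exists z ∈ K_k(A, r₀) such that ‖r₀ − A z‖₂ / ‖r₀‖₂ ≤ (‖c‖_∞ / ‖c‖₂) · ‖Λ y − 𝟙‖₂, where ‖c‖_∞ = max_{1≤i≤d}|cᵢ| and ‖c‖₂ = (Σ_{i=1}^d |cᵢ|²)^{1/2}. -/

import Mathlib

/-!
Take `z = ∑ⱼ yⱼ Aʲ r₀`. Since `Aᵐ vᵢ = λᵢᵐ vᵢ`, the residual is `r₀ - A z = ∑ᵢ cᵢ (1 - (Λ y)ᵢ) vᵢ`,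
and by orthonormality its norm is the `ℓ²` norm of the coefficient vector `c ⊙ (𝟙 - Λ y)`, which is
at most `‖c‖_∞ ‖Λ y - 𝟙‖₂`; likewise `‖r₀‖₂ = ‖c‖₂`.
-/

/-- The Euclidean (ℓ²) norm of a complex vector. -/
noncomputable def euclNorm {m : ℕ} (x : Fin m → ℂ) : ℝ :=
  Real.sqrt (∑ t, ‖x t‖ ^ 2)

open Finset

theorem Orthonormal.norm_sum_smul_sq {𝕜 E ι : Type*} [RCLike 𝕜] [NormedAddCommGroup E]
    [InnerProductSpace 𝕜 E] [Fintype ι] {v : ι → E} (hv : Orthonormal 𝕜 v) (w : ι → 𝕜) :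
    ‖∑ i, w i • v i‖ ^ 2 = ∑ i, ‖w i‖ ^ 2 := by
  rw [← inner_self_eq_norm_sq (𝕜 := 𝕜), hv.inner_sum]
  simp_rw [RCLike.conj_mul, ← RCLike.ofReal_pow, ← RCLike.ofReal_sum, RCLike.ofReal_re]

theorem euclNorm_eq_norm_toLp {m : ℕ} (x : Fin m → ℂ) : euclNorm x = ‖WithLp.toLp 2 x‖ :=
  (EuclideanSpace.norm_eq _).symm

theorem euclNorm_nonneg {m : ℕ} (x : Fin m → ℂ) : 0 ≤ euclNorm x := Real.sqrt_nonneg _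

theorem euclNorm_sub_comm {m : ℕ} (x y : Fin m → ℂ) : euclNorm (x - y) = euclNorm (y - x) := by
  simp only [euclNorm_eq_norm_toLp, WithLp.toLp_sub, norm_sub_rev]

theorem euclNorm_sum_smul_of_orthonormal {m d : ℕ} {v : Fin d → EuclideanSpace ℂ (Fin m)}
    (hv : Orthonormal ℂ v) (w : Fin d → ℂ) :
    euclNorm (∑ i, w i • fun t => v i t) = euclNorm w := by
  have hcoe : (∑ i, w i • fun t => v i t) = (∑ i, w i • v i).ofLp := by simp
  rw [hcoe, euclNorm_eq_norm_toLp, WithLp.toLp_ofLp, euclNorm,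
    ← hv.norm_sum_smul_sq, Real.sqrt_sq (norm_nonneg _)]

theorem euclNorm_mul_le {m : ℕ} (c w : Fin m → ℂ) :
    euclNorm (c * w) ≤ (⨆ i, ‖c i‖) * euclNorm w := by
  have hM : 0 ≤ ⨆ i, ‖c i‖ := Real.iSup_nonneg fun i => norm_nonneg _
  rw [euclNorm, euclNorm, ← Real.sqrt_sq hM, ← Real.sqrt_mul (sq_nonneg _), mul_sum]
  gcongr with i
  rw [Pi.mul_apply, norm_mul, mul_pow]
  gcongr
  exact le_ciSup (f := fun i => ‖c i‖) (Set.finite_range _).bddAbove i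

namespace Matrix

variable {R m ι : Type*} [Fintype m] [DecidableEq m] [Fintype ι]

theorem pow_mulVec_of_mulVec_eq_smul [CommSemiring R] {A : Matrix m m R} {x : m → R} {μ : R}
    (h : A *ᵥ x = μ • x) (k : ℕ) :
    (A ^ k) *ᵥ x = μ ^ k • x := by
  induction k with
  | zero => simp
  | succ k ih => rw [pow_succ', ← mulVec_mulVec, ih, mulVec_smul, h, smul_smul, pow_succ]

theorem pow_mulVec_sum_smul [CommSemiring R] {A : Matrix m m R} {x : ι → m → R} {μ : ι → R}
    (h : ∀ i, A *ᵥ x i = μ i • x i) (c : ι → R) (k : ℕ) :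
    (A ^ k) *ᵥ (∑ i, c i • x i) = ∑ i, (c i * μ i ^ k) • x i := by
  simp only [mulVec_sum, mulVec_smul, pow_mulVec_of_mulVec_eq_smul (h _), smul_smul]

theorem sub_mulVec_sum_pow_mulVec [CommRing R] {A : Matrix m m R} {x : ι → m → R} {μ : ι → R}
    (h : ∀ i, A *ᵥ x i = μ i • x i) (c : ι → R) {k : ℕ} (y : Fin k → R) :
    ∑ i, c i • x i - A *ᵥ (∑ j, y j • (A ^ (j : ℕ)) *ᵥ (∑ i, c i • x i)) =
      ∑ i, (c i * (1 - (of fun i (j : Fin k) => μ i ^ ((j : ℕ) + 1)) *ᵥ y) i) • x i := by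
  simp only [pow_mulVec_sum_smul h]
  simp only [mulVec_sum, mulVec_smul, h, smul_sum, smul_smul]
  rw [sum_comm, ← sum_sub_distrib]
  refine sum_congr rfl fun i _ => ?_
  rw [← sum_smul, ← sub_smul]
  congr 1
  simp only [Pi.sub_apply, Pi.one_apply, mulVec_apply_eq_sum, of_apply, mul_sub, mul_one, mul_sum]
  exact congrArg _ (sum_congr rfl fun j _ => by ring)

end Matrix

theorem gmres_relative_residual_bound_orthonormal_general
    (n d : ℕ) (A : Matrix (Fin n) (Fin n) ℂ)
    (v : Fin d → EuclideanSpace ℂ (Fin n)) (hv : Orthonormal ℂ v)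
    (lam : Fin d → ℂ) (c : Fin d → ℂ)
    (heig : ∀ i, A.mulVec (fun t => v i t) = lam i • fun t => v i t)
    (r₀ : Fin n → ℂ) (hr₀ : r₀ = ∑ i, c i • fun t => v i t) :
    euclNorm r₀ = Real.sqrt (∑ i, ‖c i‖ ^ 2) ∧
      ∀ k : ℕ, 1 ≤ k → ∀ y : Fin k → ℂ,
        ∃ z ∈ Submodule.span ℂ (Set.range fun j : Fin k => (A ^ (j : ℕ)).mulVec r₀),
          euclNorm (r₀ - A.mulVec z) / euclNorm r₀ ≤
            ((⨆ i, ‖c i‖) / Real.sqrt (∑ i, ‖c i‖ ^ 2)) *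
              euclNorm ((Matrix.of fun i (j : Fin k) => lam i ^ ((j : ℕ) + 1)).mulVec y
                - fun _ => 1) := by
  subst hr₀
  refine ⟨euclNorm_sum_smul_of_orthonormal hv c, fun k _ y =>
    ⟨_, (Submodule.mem_span_range_iff_exists_fun ℂ).2 ⟨y, rfl⟩, ?_⟩⟩
  rw [Matrix.sub_mulVec_sum_pow_mulVec heig, euclNorm_sum_smul_of_orthonormal hv,
    euclNorm_sum_smul_of_orthonormal hv, div_mul_eq_mul_div, euclNorm_sub_comm]
  exact div_le_div_of_nonneg_right (euclNorm_mul_le _ _) (euclNorm_nonneg _)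

/-- Lemma 1: if `v₁,…,v_d` are orthonormal and not all `cᵢ` vanish, then
`‖r₀‖₂ = ‖c‖₂` and for every `k ≥ 1` and every `y ∈ ℂ^k` there is `z ∈ K_k(A, r₀)` with
`‖r₀ − A z‖₂ / ‖r₀‖₂ ≤ (‖c‖_∞ / ‖c‖₂) ‖Λ y − 𝟙‖₂`. -/
theorem gmres_relative_residual_bound_orthonormal
    (n d : ℕ) (A : Matrix (Fin n) (Fin n) ℂ)
    (v : Fin d → EuclideanSpace ℂ (Fin n)) (hv : Orthonormal ℂ v)
    (lam : Fin d → ℂ) (c : Fin d → ℂ)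
    (heig : ∀ i, A.mulVec (fun t => v i t) = lam i • fun t => v i t)
    (hnz : ∀ i, lam i ≠ 0) (hdist : Function.Injective lam)
    (hc : c ≠ 0)
    (r₀ : Fin n → ℂ) (hr₀ : r₀ = ∑ i, c i • fun t => v i t) :
    euclNorm r₀ = Real.sqrt (∑ i, ‖c i‖ ^ 2) ∧
      ∀ k : ℕ, 1 ≤ k → ∀ y : Fin k → ℂ,
        ∃ z ∈ Submodule.span ℂ (Set.range fun j : Fin k => (A ^ (j : ℕ)).mulVec r₀),
          euclNorm (r₀ - A.mulVec z) / euclNorm r₀ ≤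
            ((⨆ i, ‖c i‖) / Real.sqrt (∑ i, ‖c i‖ ^ 2)) *
              euclNorm ((Matrix.of fun i (j : Fin k) => lam i ^ ((j : ℕ) + 1)).mulVec y
                - fun _ => 1) :=
  gmres_relative_residual_bound_orthonormal_general n d A v hv lam c heig r₀ hr₀
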